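/- A finite simple graph G is an interval graph (i.e., there exists a family of nonempty closed intervals of the real line indexed by the vertices of G such that two distinct vertices are adjacent in G if and only if the corresponding intervals intersect) if and only if there exists a linear ordering of the maximal cliques of G such that for every vertex v of G, the maximal cliques containing v appear consecutively in that ordering. -/

import Mathlib

/-- A finite simple graph is an interval graph if each vertex can be assigned a
nonempty closed interval of the real line such that distinct vertices are adjacent
if and only if their intervals intersect. -/
def IsIntervalGraph {V : Type*} (G : SimpleGraph V) : Prop :=
  ∃ a b : V → ℝ, (∀ v, a v ≤ b v) ∧
    ∀ u v : V, u ≠ v →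
      (G.Adj u v ↔ (Set.Icc (a u) (b u) ∩ Set.Icc (a v) (b v)).Nonempty)

/-- A maximal clique: a clique not properly contained in any other clique. -/
def IsMaxClique {V : Type*} (G : SimpleGraph V) (C : Set V) : Prop :=
  G.IsClique C ∧ ∀ D : Set V, G.IsClique D → C ⊆ D → C = D

/-- There is a linear ordering of the maximal cliques of `G` such that for every
vertex `v`, the maximal cliques containing `v` appear consecutively. -/
def HasConsecutiveCliqueOrdering {V : Type*} (G : SimpleGraph V) : Prop :=
  ∃ r : {C : Set V // IsMaxClique G C} → {C : Set V // IsMaxClique G C} → Prop,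
    IsLinearOrder {C : Set V // IsMaxClique G C} r ∧
    ∀ v : V, ∀ C₁ C₂ C₃ : {C : Set V // IsMaxClique G C},
      r C₁ C₂ → r C₂ C₃ → v ∈ C₁.1 → v ∈ C₃.1 → v ∈ C₂.1

/-!
In an interval model the intervals of a clique share a point (the largest left endpoint), so each
maximal clique `C` is the set of vertices whose intervals contain some point `x C`. Ordering the
maximal cliques by `x C` works: those containing `v` are exactly those with `x C ∈ [a v, b v]`.
Conversely, embed the ordered maximal cliques into `ℝ` in order and give `v` the hull of the images
of the cliques containing it. These cliques form a block, so two hulls meet iff the blocks share a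
clique, i.e. iff some maximal clique contains both vertices.
-/

open Set

noncomputable abbrev IsLinearOrder.toLinearOrder {α : Type*} {r : α → α → Prop}
    (hr : IsLinearOrder α r) : LinearOrder α where
  le := r
  le_refl := hr.refl
  le_trans := hr.trans
  le_antisymm := hr.antisymm
  le_total := hr.total
  toDecidableLE := Classical.decRel r

lemma StrictMono.Icc_inter_Icc_nonempty_iff {α β : Type*} [LinearOrder α] [LinearOrder β]
    {f : α → β} (hf : StrictMono f) {a₁ b₁ a₂ b₂ : α} :
    (Icc (f a₁) (f b₁) ∩ Icc (f a₂) (f b₂)).Nonempty ↔ (Icc a₁ b₁ ∩ Icc a₂ b₂).Nonempty := by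
  simp only [Icc_inter_Icc, nonempty_Icc]
  rw [← hf.monotone.map_max, ← hf.monotone.map_min, hf.le_iff_le]

lemma Set.Finite.exists_eq_Icc_of_ordConnected {α : Type*} [LinearOrder α] {s : Set α}
    (hs : s.Finite) (hne : s.Nonempty) (hconv : s.OrdConnected) : ∃ lo hi, s = Icc lo hi := by
  obtain ⟨lo, hlo, hlo_le⟩ := exists_min_image s id hs hne
  obtain ⟨hi, hhi, hle_hi⟩ := exists_max_image s id hs hne
  exact ⟨lo, hi, Subset.antisymm (fun x hx => ⟨hlo_le x hx, hle_hi x hx⟩) (hconv.out hlo hhi)⟩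

lemma Function.Injective.isLinearOrder_le {α β : Type*} [LinearOrder β] {f : α → β}
    (hf : Function.Injective f) : IsLinearOrder α (fun a b => f a ≤ f b) :=
  let := LinearOrder.lift' f hf
  inferInstanceAs (IsLinearOrder α (· ≤ ·))

section MaxClique

variable {V : Type*} {G : SimpleGraph V}

lemma exists_isMaxClique_superset [Finite V] {s : Set V} (hs : G.IsClique s) :
    ∃ C, IsMaxClique G C ∧ s ⊆ C := by
  obtain ⟨C, hsC, hC, hmax⟩ := Finite.exists_le_maximal hs
  exact ⟨C, ⟨hC, fun D hD hCD => hCD.antisymm (hmax hD hCD)⟩, hsC⟩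

lemma exists_isMaxClique_mem [Finite V] (v : V) : ∃ C, IsMaxClique G C ∧ v ∈ C :=
  (exists_isMaxClique_superset (G.isClique_singleton v)).imp fun _ ⟨hC, hvC⟩ => ⟨hC, hvC rfl⟩

lemma adj_iff_exists_isMaxClique [Finite V] {u v : V} (huv : u ≠ v) :
    G.Adj u v ↔ ∃ C, IsMaxClique G C ∧ u ∈ C ∧ v ∈ C := by
  refine ⟨fun h => ?_, fun ⟨C, hC, hu, hv⟩ => hC.1 hu hv huv⟩
  obtain ⟨C, hC, huvC⟩ := exists_isMaxClique_superset (G.isClique_pair.2 fun _ => h)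
  exact ⟨C, hC, huvC (mem_insert u _), huvC (mem_insert_of_mem u rfl)⟩

end MaxClique

section IntervalModel

variable {V : Type*} {G : SimpleGraph V} {a b : V → ℝ}

lemma isClique_setOf_mem_Icc
    (hrep : ∀ u v, u ≠ v → (G.Adj u v ↔ (Icc (a u) (b u) ∩ Icc (a v) (b v)).Nonempty))
    (x : ℝ) : G.IsClique {w | x ∈ Icc (a w) (b w)} :=
  fun u hu v hv huv => (hrep u v huv).2 ⟨x, hu, hv⟩

lemma SimpleGraph.IsClique.exists_forall_mem_Icc (hab : ∀ v, a v ≤ b v)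
    (hrep : ∀ u v, u ≠ v → (G.Adj u v ↔ (Icc (a u) (b u) ∩ Icc (a v) (b v)).Nonempty))
    {C : Set V} (hC : G.IsClique C) (hfin : C.Finite) : ∃ x, ∀ w ∈ C, x ∈ Icc (a w) (b w) := by
  rcases C.eq_empty_or_nonempty with rfl | hne
  · exact ⟨0, fun _ => False.elim⟩
  obtain ⟨u, hu, hle⟩ := exists_max_image C a hfin hne
  refine ⟨a u, fun w hw => ⟨hle w hw, ?_⟩⟩
  obtain rfl | hwu := eq_or_ne w u
  · exact hab w
  · obtain ⟨y, hyw, hyu⟩ := (hrep w u hwu).1 (hC hw hu hwu)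
    exact hyu.1.trans hyw.2

lemma IsMaxClique.exists_eq_setOf_mem_Icc [Finite V] (hab : ∀ v, a v ≤ b v)
    (hrep : ∀ u v, u ≠ v → (G.Adj u v ↔ (Icc (a u) (b u) ∩ Icc (a v) (b v)).Nonempty))
    {C : Set V} (hC : IsMaxClique G C) : ∃ x, C = {w | x ∈ Icc (a w) (b w)} := by
  obtain ⟨x, hx⟩ := hC.1.exists_forall_mem_Icc hab hrep C.toFinite
  exact ⟨x, hC.2 _ (isClique_setOf_mem_Icc hrep x) hx⟩

end IntervalModel

section IntervalGraph

variable {V : Type*} {G : SimpleGraph V}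

theorem isIntervalGraph_of_ordConnected {K : Type*} [LinearOrder K] [Finite K] (S : V → Set K)
    (hne : ∀ v, (S v).Nonempty) (hconv : ∀ v, (S v).OrdConnected)
    (hadj : ∀ u v, u ≠ v → (G.Adj u v ↔ (S u ∩ S v).Nonempty)) : IsIntervalGraph G := by
  obtain ⟨f⟩ := Order.embedding_from_countable_to_dense K ℝ
  choose lo hi hIcc using fun v => (toFinite (S v)).exists_eq_Icc_of_ordConnected (hne v) (hconv v)
  refine ⟨f ∘ lo, f ∘ hi, fun v => f.monotone (nonempty_Icc.1 (hIcc v ▸ hne v)),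
    fun u v huv => ?_⟩
  rw [hadj u v huv, hIcc, hIcc]
  exact f.strictMono.Icc_inter_Icc_nonempty_iff.symm

theorem IsIntervalGraph.hasConsecutiveCliqueOrdering [Finite V] (h : IsIntervalGraph G) :
    HasConsecutiveCliqueOrdering G := by
  obtain ⟨a, b, hab, hrep⟩ := h
  choose x hx using fun C : {C // IsMaxClique G C} => C.2.exists_eq_setOf_mem_Icc hab hrep
  have hinj : Function.Injective x := fun C D h => Subtype.ext ((hx C).trans (h ▸ (hx D).symm))
  refine ⟨fun C D => x C ≤ x D, hinj.isLinearOrder_le, fun v C₁ C₂ C₃ h₁₂ h₂₃ hv₁ hv₃ => ?_⟩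
  rw [hx C₁] at hv₁
  rw [hx C₃] at hv₃
  rw [hx C₂]
  exact ⟨hv₁.1.trans h₁₂, h₂₃.trans hv₃.2⟩

theorem HasConsecutiveCliqueOrdering.isIntervalGraph [Finite V]
    (h : HasConsecutiveCliqueOrdering G) : IsIntervalGraph G := by
  obtain ⟨r, hr, hcon⟩ := h
  -- explicit instances: on this subtype `≤` would otherwise resolve to inclusion of sets
  refine @isIntervalGraph_of_ordConnected _ G _ hr.toLinearOrder _ (fun v => {C | v ∈ C.1})
    (fun v => ?_) (fun v => @OrdConnected.mk _ hr.toLinearOrder.toPreorder _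
      fun C₁ h₁ C₃ h₃ C₂ h => hcon v C₁ C₂ C₃ h.1 h.2 h₁ h₃)
    (fun u v huv => ?_)
  · obtain ⟨C, hC, hv⟩ := exists_isMaxClique_mem (G := G) v
    exact ⟨⟨C, hC⟩, hv⟩
  · rw [adj_iff_exists_isMaxClique huv]
    exact ⟨fun ⟨C, hC, hu, hv⟩ => ⟨⟨C, hC⟩, hu, hv⟩, fun ⟨C, hu, hv⟩ => ⟨C.1, C.2, hu, hv⟩⟩

end IntervalGraph

/-- **Fulkerson–Gross.** A finite graph is an interval graph iff its maximal cliques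
admit a linear ordering in which, for every vertex, the cliques containing that
vertex are consecutive. -/
theorem interval_iff_consecutive_clique_ordering {V : Type*} [Fintype V]
    (G : SimpleGraph V) :
    IsIntervalGraph G ↔ HasConsecutiveCliqueOrdering G :=
  ⟨IsIntervalGraph.hasConsecutiveCliqueOrdering, HasConsecutiveCliqueOrdering.isIntervalGraph⟩
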